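/- arXiv:1106.3012 — 6 statements merged into one kernel-verified Lean document; each statement's English description precedes it below -/
import Mathlib

section
/- Let M be a module over a ring R, let N be a submodule of M, and fix elements s_0, ..., s_k of R acting on M (on the right) as linear maps S_i : M → M, x ↦ x·s_i. Suppose for each 0 ≤ m ≤ k there is a linear map ψ_m : M → M such that: (i) ψ_m maps N into N; (ii) for all x ∈ N and all i < m, (x·s_i)ψ_m = (xψ_m)·s_i; and (iii) for all x ∈ N, (xψ_m)·s_m + (x·s_m)ψ_m = x. If x ∈ N satisfies x·s_i = 0 for all 0 ≤ i ≤ k, then for each 0 ≤ i ≤ k the element y_i = xψ_iψ_{i−1}⋯ψ_1ψ_0 satisfies y_i·(s_0 s_1 ⋯ s_i) = x. In particular, x lies in the image of the map z ↦ z·(s_0 s_1 ⋯ s_i) for every i ≤ k. -/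
/-!
If `z ∈ N` is killed by `s_0, …, s_i`, the homotopy relation for `ψ_i` collapses to
`(z ψ_i) s_i = z`, while commutation with `s_0, …, s_{i-1}` shows that `z ψ_i ∈ N` is again
killed by `s_0, …, s_{i-1}`. Induction on `i` then gives `(z ψ_i ⋯ ψ_0)(s_0 ⋯ s_i) = z`.
-/

/-- `applyPsi ψ i x = x ψ_i ψ_{i-1} ⋯ ψ_1 ψ_0` (right-action notation:
`ψ_i` is applied first, then `ψ_{i-1}`, ..., and `ψ_0` last). -/
def applyPsi {M : Type*} (ψ : ℕ → M → M) : ℕ → M → M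
  | 0, x => ψ 0 x
  | i + 1, x => applyPsi ψ i (ψ (i + 1) x)

/-- `applyS S i y = y·(s_0 s_1 ⋯ s_i)` (right-action notation:
`S 0` is applied first, then `S 1`, ..., and `S i` last). -/
def applyS {M : Type*} (S : ℕ → M → M) : ℕ → M → M
  | 0, x => S 0 x
  | i + 1, x => S (i + 1) (applyS S i x)

section

variable {R M : Type*} [Semiring R] [AddCommMonoid M] [Module R M]

structure IsHomotopySystem (N : Submodule R M) (S ψ : ℕ → M →ₗ[R] M) (k : ℕ) : Prop where
  mapsTo : ∀ m ≤ k, ∀ x ∈ N, ψ m x ∈ N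
  comm : ∀ m ≤ k, ∀ i < m, ∀ x ∈ N, ψ m (S i x) = S i (ψ m x)
  homotopy : ∀ m ≤ k, ∀ x ∈ N, S m (ψ m x) + ψ m (S m x) = x

namespace IsHomotopySystem

variable {N : Submodule R M} {S ψ : ℕ → M →ₗ[R] M} {k : ℕ}

theorem mono (h : IsHomotopySystem N S ψ k) {i : ℕ} (hik : i ≤ k) :
    IsHomotopySystem N S ψ i where
  mapsTo m hm := h.mapsTo m (hm.trans hik)
  comm m hm := h.comm m (hm.trans hik)
  homotopy m hm := h.homotopy m (hm.trans hik)

theorem S_psi_apply_eq_self (h : IsHomotopySystem N S ψ k) {m : ℕ} (hm : m ≤ k) {z : M}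
    (hz : z ∈ N) (hSz : S m z = 0) : S m (ψ m z) = z := by
  simpa [hSz] using h.homotopy m hm z hz

theorem S_psi_apply_eq_zero (h : IsHomotopySystem N S ψ k) {m : ℕ} (hm : m ≤ k) {z : M}
    (hz : z ∈ N) {j : ℕ} (hj : j < m) (hSz : S j z = 0) : S j (ψ m z) = 0 := by
  rw [← h.comm m hm j hj z hz, hSz, map_zero]

theorem applyS_applyPsi (h : IsHomotopySystem N S ψ k) {z : M} (hz : z ∈ N)
    (hann : ∀ j ≤ k, S j z = 0) :
    applyS (fun j y => S j y) k (applyPsi (fun j y => ψ j y) k z) = z := by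
  induction k generalizing z with
  | zero => exact h.S_psi_apply_eq_self le_rfl hz (hann 0 le_rfl)
  | succ i ih =>
    have hψz_ann : ∀ j ≤ i, S j (ψ (i + 1) z) = 0 := fun j hj =>
      h.S_psi_apply_eq_zero le_rfl hz (Nat.lt_succ_of_le hj) (hann j (hj.trans i.le_succ))
    have hψz : applyS (fun j y => S j y) i (applyPsi (fun j y => ψ j y) i (ψ (i + 1) z)) =
        ψ (i + 1) z :=
      ih (h.mono i.le_succ) (h.mapsTo _ le_rfl z hz) hψz_ann
    simp only [applyS, applyPsi]
    rw [hψz]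
    exact h.S_psi_apply_eq_self le_rfl hz (hann _ le_rfl)

end IsHomotopySystem

end

/-- Abstract form of the main theorem on k-th order homotopy systems, over F₂.
`S i` is right multiplication by `s_i` and `ψ i` the homotopies; `N` is the
null subspace.  If `x ∈ N` is annihilated by all `s_i`, `i ≤ k`, then
`y_i = x ψ_i ⋯ ψ_0` satisfies `y_i ·(s_0 ⋯ s_i) = x`; in particular `x` is in
the image of `z ↦ z·(s_0 ⋯ s_i)` for every `i ≤ k`. -/
theorem stmt_4 (M : Type*) [AddCommGroup M] [Module (ZMod 2) M]
    (N : Submodule (ZMod 2) M) (k : ℕ)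
    (S ψ : ℕ → M →ₗ[ZMod 2] M)
    (hstable : ∀ m ≤ k, ∀ x ∈ N, ψ m x ∈ N)
    (hcomm : ∀ m ≤ k, ∀ i < m, ∀ x ∈ N, ψ m (S i x) = S i (ψ m x))
    (hhtpy : ∀ m ≤ k, ∀ x ∈ N, S m (ψ m x) + ψ m (S m x) = x)
    (x : M) (hxN : x ∈ N) (hann : ∀ i ≤ k, S i x = 0) :
    ∀ i ≤ k,
      applyS (fun j y => S j y) i (applyPsi (fun j y => ψ j y) i x) = x ∧
      ∃ y : M, applyS (fun j y => S j y) i y = x := by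
  intro i hi
  have hsys : IsHomotopySystem N S ψ i := (IsHomotopySystem.mk hstable hcomm hhtpy).mono hi
  have hy := hsys.applyS_applyPsi hxN fun j hj => hann j (hj.trans hi)
  exact ⟨hy, _, hy⟩
end

section
/- Let ∇₁ be the F₂-vector space with basis {[a] : a ∈ ℤ}, with operations Sq^{2^n} defined by [a]Sq^{2^n} = c(a − 2^n, n)·[a − 2^n], where c(b, n) ∈ F₂ equals 1 if b mod 2^{n+1} ∈ [2^n, 2^{n+1}) and 0 otherwise, and let ψ^{2^m} be the shift [a] ↦ [a + 2^m]. Then for all a ∈ ℤ and all m > n ≥ 0: [a]ψ^{2^m}Sq^{2^n} = [a]Sq^{2^n}ψ^{2^m}, and for all m ≥ 0: [a]ψ^{2^m}Sq^{2^m} + [a]Sq^{2^m}ψ^{2^m} = [a]. -/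
noncomputable section

/-- `∇₁`: the F₂-vector space with basis `{[a] : a ∈ ℤ}`. -/
abbrev Nabla : Type := ℤ →₀ ZMod 2

/-- The mod-2 generalized binomial coefficient `((b choose 2^n))`:
`1` iff `b mod 2^(n+1) ∈ [2^n, 2^(n+1))`. -/
def cc (b : ℤ) (n : ℕ) : ZMod 2 :=
  if (2 : ℤ) ^ n ≤ b % 2 ^ (n + 1) then 1 else 0

/-- The operation `Sq^{2^n}` on `∇₁`: `[a]Sq^{2^n} = c(a − 2^n, n)·[a − 2^n]`. -/
def sqN (n : ℕ) (x : Nabla) : Nabla :=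
  x.sum fun a co => co • (cc (a - 2 ^ n) n • Finsupp.single (a - 2 ^ n) (1 : ZMod 2))

/-- The shift map `ψ^{2^m} : [a] ↦ [a + 2^m]`. -/
def psiN (m : ℕ) (x : Nabla) : Nabla :=
  x.sum fun a co => Finsupp.single (a + 2 ^ m) co

/-!
On basis elements both operations are monomial, `[a] ↦ c·[a - 2^n]` and `[a] ↦ [a + 2^m]`, so
both identities reduce to properties of the coefficient `cc b n`, which is just bit `n` of `b`,
i.e. the parity of `b / 2^n`. Shifting `b` by `2^m` with `m > n` changes `b / 2^n` by an even
number, and shifting by `-2^n` changes its parity.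
-/

lemma psiN_single (m : ℕ) (a : ℤ) (c : ZMod 2) :
    psiN m (Finsupp.single a c) = Finsupp.single (a + 2 ^ m) c :=
  Finsupp.sum_single_index (Finsupp.single_zero _)

lemma sqN_single (n : ℕ) (a : ℤ) (c : ZMod 2) :
    sqN n (Finsupp.single a c) = Finsupp.single (a - 2 ^ n) (c * cc (a - 2 ^ n) n) := by
  rw [sqN, Finsupp.sum_single_index, Finsupp.smul_single, Finsupp.smul_single,
    smul_eq_mul, smul_eq_mul, mul_one]
  exact zero_smul _ _

lemma emod_mul_two (b : ℤ) {k : ℤ} (hk : 0 ≤ k) : b % (k * 2) = b % k + k * (b / k % 2) := by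
  have hdiv : b / (k * 2) = b / k / 2 := (Int.ediv_ediv_of_nonneg hk).symm
  rw [Int.emod_def, hdiv, Int.emod_def b k, Int.emod_def (b / k) 2]
  ring

lemma cc_eq_intCast_ediv (b : ℤ) (n : ℕ) : cc b n = ((b / 2 ^ n : ℤ) : ZMod 2) := by
  have hk : (0 : ℤ) < 2 ^ n := by positivity
  have hr := Int.emod_lt_of_pos b hk
  have hr₀ := Int.emod_nonneg b hk.ne'
  rw [cc, pow_succ, emod_mul_two b hk.le]
  rcases Int.emod_two_eq_zero_or_one (b / 2 ^ n) with h | h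
  · rw [h, if_neg (by omega), eq_comm, ZMod.intCast_eq_zero_iff_even, Int.even_iff, h]
  · rw [h, if_pos (by omega), eq_comm, ZMod.intCast_eq_one_iff_odd, Int.odd_iff, h]

lemma cc_add_two_pow_mul (b j : ℤ) (n : ℕ) : cc (b + 2 ^ n * j) n = cc b n + j := by
  have hk : (2 : ℤ) ^ n ≠ 0 := by positivity
  rw [cc_eq_intCast_ediv, cc_eq_intCast_ediv, Int.add_mul_ediv_left _ _ hk, Int.cast_add]

lemma cc_add_two_pow_of_lt (b : ℤ) {m n : ℕ} (h : n < m) : cc (b + 2 ^ m) n = cc b n := by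
  have hsplit : (2 : ℤ) ^ m = 2 ^ n * 2 ^ (m - n) := by rw [← pow_add, Nat.add_sub_cancel' h.le]
  have heven : ((2 ^ (m - n) : ℤ) : ZMod 2) = 0 := by
    rw [ZMod.intCast_eq_zero_iff_even]
    exact (Int.even_pow' (by omega)).mpr even_two
  rw [hsplit, cc_add_two_pow_mul, heven, add_zero]

lemma cc_add_cc_sub_two_pow (b : ℤ) (n : ℕ) : cc b n + cc (b - 2 ^ n) n = 1 := by
  have hshift : cc (b - 2 ^ n) n = cc b n + 1 := by
    simpa [← sub_eq_add_neg] using cc_add_two_pow_mul b (-1) n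
  rw [hshift, ← add_assoc, CharTwo.add_self_eq_zero, zero_add]

/-- In `∇₁`: for `m > n`, `[a]ψ^{2^m}Sq^{2^n} = [a]Sq^{2^n}ψ^{2^m}`, and for all `m`,
`[a]ψ^{2^m}Sq^{2^m} + [a]Sq^{2^m}ψ^{2^m} = [a]`. -/
theorem stmt_5 (a : ℤ) :
    (∀ m n : ℕ, n < m →
      sqN n (psiN m (Finsupp.single a 1)) = psiN m (sqN n (Finsupp.single a 1))) ∧
    (∀ m : ℕ,
      sqN m (psiN m (Finsupp.single a 1)) + psiN m (sqN m (Finsupp.single a 1)) =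
        Finsupp.single a 1) := by
  refine ⟨fun m n hnm => ?_, fun m => ?_⟩
  · rw [psiN_single, sqN_single, sqN_single, psiN_single, add_sub_right_comm,
      cc_add_two_pow_of_lt _ hnm]
  · rw [psiN_single, sqN_single, sqN_single, psiN_single, add_sub_cancel_right, sub_add_cancel,
      one_mul, one_mul, ← Finsupp.single_add, cc_add_cc_sub_two_pow]
end
end

section
/- Let Γ₁ be the F₂-vector space with basis {[a] : a ≥ 1}, with right action [a]Sq^i = C(a − i, i)·[a − i] mod 2 (zero if a − i < 1). For m ≥ 0 and a ≥ 2^m, the homotopy relation holds: [a]ψ^{2^m}Sq^{2^m} + [a]Sq^{2^m}ψ^{2^m} = [a], where ψ^{2^m}[a] = [a + 2^m]. -/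
noncomputable section

/-- `Γ₁`: the F₂-vector space with basis `{[a] : a ≥ 1}`. -/
abbrev Gamma1 : Type := ℕ →₀ ZMod 2

/-- The basis element `[a]`. -/
def e (a : ℕ) : Gamma1 := Finsupp.single a 1

/-- The right Steenrod action: `[a]Sq^i = C(a−i, i)·[a−i]` mod 2
(zero if `a − i < 1`, since then `C(a−i,i) ≡ 0` for `i ≥ 1`). -/
def sq1 (i : ℕ) (x : Gamma1) : Gamma1 :=
  x.sum fun a c => c • ((Nat.choose (a - i) i : ZMod 2) • e (a - i))

/-- The shift map `ψ^{2^m} : [a] ↦ [a + 2^m]`. -/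
def psi1 (m : ℕ) (x : Gamma1) : Gamma1 :=
  x.sum fun a c => Finsupp.single (a + 2 ^ m) c

/-!
By Lucas' theorem `C(n, p^m) ≡ ⌊n / p^m⌋ (mod p)`. For `a ≥ 2^m` the two coefficients
`C(a, 2^m)` and `C(a - 2^m, 2^m)` that appear are therefore `⌊a / 2^m⌋` and `⌊a / 2^m⌋ - 1`
mod 2, and of two consecutive integers exactly one is odd.
-/

theorem Nat.cast_choose_prime_pow_eq_div (p : ℕ) [Fact p.Prime] (n m : ℕ) :
    (n.choose (p ^ m) : ZMod p) = (n / p ^ m : ℕ) := by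
  have hp := (Fact.out : p.Prime)
  have lucas := (ZMod.intCast_eq_intCast_iff _ _ p).mpr
    (Choose.choose_modEq_choose_mul_prod_range_choose (n := n) (k := p ^ m) m)
  push_cast at lucas
  rw [lucas, Nat.div_self (pow_pos hp.pos m), Nat.choose_one_right,
    Finset.prod_eq_one, mul_one]
  intro i hi
  rw [Nat.pow_div (Finset.mem_range.mp hi).le hp.pos, Nat.pow_mod, Nat.mod_self,
    zero_pow (by grind), Nat.zero_mod, Nat.choose_zero_right, Nat.cast_one]

theorem Nat.cast_choose_two_pow_add_cast_choose_sub_two_pow (m a : ℕ) (ha : 2 ^ m ≤ a) :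
    (a.choose (2 ^ m) : ZMod 2) + ((a - 2 ^ m).choose (2 ^ m) : ZMod 2) = 1 := by
  obtain ⟨b, rfl⟩ := Nat.exists_eq_add_of_le ha
  rw [Nat.cast_choose_prime_pow_eq_div, Nat.cast_choose_prime_pow_eq_div,
    Nat.add_sub_cancel_left, Nat.add_div_left _ (by positivity), Nat.cast_add, Nat.cast_one,
    add_right_comm, CharTwo.add_self_eq_zero, zero_add]

theorem psi1_single (m a : ℕ) (c : ZMod 2) :
    psi1 m (Finsupp.single a c) = Finsupp.single (a + 2 ^ m) c :=
  Finsupp.sum_single_index (Finsupp.single_zero _)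

theorem sq1_single (i a : ℕ) (c : ZMod 2) :
    sq1 i (Finsupp.single a c) = Finsupp.single (a - i) (c * (a - i).choose i) := by
  rw [sq1, Finsupp.sum_single_index (by rw [zero_smul]), e, Finsupp.smul_single_one,
    Finsupp.smul_single, smul_eq_mul]

/-- For `m ≥ 0` and `a ≥ 2^m`, the homotopy relation
`[a]ψ^{2^m}Sq^{2^m} + [a]Sq^{2^m}ψ^{2^m} = [a]` holds. -/
theorem stmt_7 (m a : ℕ) (ha : 2 ^ m ≤ a) :
    sq1 (2 ^ m) (psi1 m (e a)) + psi1 m (sq1 (2 ^ m) (e a)) = e a := by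
  rw [e, psi1_single, sq1_single, sq1_single, psi1_single, Nat.add_sub_cancel,
    Nat.sub_add_cancel ha, ← Finsupp.single_add, one_mul, one_mul,
    Nat.cast_choose_two_pow_add_cast_choose_sub_two_pow m a ha]

end
end

section
/- Let M be a right A-algebra (an F₂-algebra on which the mod-2 Steenrod algebra A acts on the right via the Cartan formula). For every k ≥ 0, the set Δ_M(k) = ⋂_{i=0}^{k} ker Sq^{2^i} is a subalgebra of M. -/
/-!
An element killed by `Sq^{2^i}` for all `i ≤ k` is killed by every `Sq^n` with `0 < n ≤ 2^k`:
writing `n = a + 2^j` with `0 < a < 2^j`, the Adem relation for `Sq^a Sq^{2^j}` has leading term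
`C(2^j - 1, a) Sq^n = Sq^n`, and all other terms factor through some `Sq^m` with `0 < m < n`.
Hence in the Cartan expansion of `(xy) Sq^{2^i}` the only summand not killed by `x` is
`x (y Sq^{2^i})`, which vanishes as well.
-/

noncomputable section

open FreeAlgebra

/-- The defining relations of the mod-2 Steenrod algebra: `Sq⁰ = 1` and the
Adem relations `Sq^a Sq^b = Σ_c C(b−c−1, a−2c) Sq^{a+b−c} Sq^c` for `0 < a < 2b`. -/
inductive AdemRel : FreeAlgebra (ZMod 2) ℕ → FreeAlgebra (ZMod 2) ℕ → Prop
  | sq_zero : AdemRel (ι (ZMod 2) 0) 1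
  | adem (a b : ℕ) (h0 : 0 < a) (h : a < 2 * b) :
      AdemRel (ι (ZMod 2) a * ι (ZMod 2) b)
        (∑ c ∈ Finset.range (a / 2 + 1),
          (Nat.choose (b - c - 1) (a - 2 * c) : ZMod 2) •
            (ι (ZMod 2) (a + b - c) * ι (ZMod 2) c))

/-- The mod-2 Steenrod algebra. -/
abbrev Steenrod : Type := RingQuot AdemRel

/-- The Steenrod square `Sq^n`. -/
def Sq (n : ℕ) : Steenrod := RingQuot.mkRingHom AdemRel (ι (ZMod 2) n)

theorem Sq_zero : Sq 0 = 1 := by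
  rw [Sq, RingQuot.mkRingHom_rel AdemRel.sq_zero, map_one]

theorem Sq_mul_Sq {a b : ℕ} (ha : 0 < a) (hab : a < 2 * b) :
    Sq a * Sq b = ∑ c ∈ Finset.range (a / 2 + 1),
      ((b - c - 1).choose (a - 2 * c) : ZMod 2) • (Sq (a + b - c) * Sq c) := by
  have hSq : ∀ n, Sq n = RingQuot.mkAlgHom (ZMod 2) AdemRel (ι (ZMod 2) n) := fun n => by
    rw [Sq, ← RingQuot.mkAlgHom_coe (ZMod 2) AdemRel]; rfl
  simp only [hSq, ← map_mul, ← map_smul, ← map_sum]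
  exact RingQuot.mkAlgHom_rel (ZMod 2) (AdemRel.adem a b ha hab)

theorem choose_two_pow_sub_one_cast {j a : ℕ} (ha : a < 2 ^ j) :
    ((2 ^ j - 1).choose a : ZMod 2) = 1 := by
  induction j generalizing a with
  | zero => simp [show a = 0 by omega]
  | succ j ih =>
    have hmod : (2 ^ (j + 1) - 1) % 2 = 1 := by omega
    have hdiv : (2 ^ (j + 1) - 1) / 2 = 2 ^ j - 1 := by omega
    have hone : (1 : ℕ).choose (a % 2) = 1 := by
      rcases Nat.mod_two_eq_zero_or_one a with h | h <;> simp [h]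
    rw [(ZMod.natCast_eq_natCast_iff _ _ _).mpr
      (Choose.choose_modEq_choose_mod_mul_choose_div_nat (p := 2)), hmod, hdiv, hone,
      Nat.cast_mul, ih (by omega), Nat.cast_one, one_mul]

theorem Sq_mul_Sq_two_pow {a j : ℕ} (ha : 0 < a) (haj : a < 2 ^ j) :
    Sq a * Sq (2 ^ j) = Sq (a + 2 ^ j) + ∑ c ∈ Finset.range (a / 2),
      ((2 ^ j - (c + 1) - 1).choose (a - 2 * (c + 1)) : ZMod 2) •
        (Sq (a + 2 ^ j - (c + 1)) * Sq (c + 1)) := by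
  rw [Sq_mul_Sq ha (by omega), Finset.sum_range_succ', add_comm]
  simp [choose_two_pow_sub_one_cast haj, Sq_zero]

theorem Nat.exists_eq_add_two_pow_of_ne_two_pow {n : ℕ} (hn : 0 < n) (h : ∀ i, n ≠ 2 ^ i) :
    ∃ a j, 0 < a ∧ a < 2 ^ j ∧ n = a + 2 ^ j := by
  have hle : 2 ^ Nat.log 2 n ≤ n := Nat.pow_log_le_self 2 hn.ne'
  have hlt : n < 2 ^ (Nat.log 2 n + 1) := Nat.lt_pow_succ_log_self one_lt_two n
  have hne := h (Nat.log 2 n)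
  refine ⟨n - 2 ^ Nat.log 2 n, Nat.log 2 n, by omega, by rw [pow_succ] at hlt; omega, by omega⟩

section RightAction

variable {M : Type*} [AddCommGroup M] [Module (ZMod 2) M]
  (act : M →ₗ[ZMod 2] Steenrod →ₗ[ZMod 2] M)
  (hmul : ∀ (x : M) (a b : Steenrod), act x (a * b) = act (act x a) b)
include hmul

theorem act_mul_eq_zero_of_act_eq_zero {x : M} {a : Steenrod} (h : act x a = 0) (b : Steenrod) :
    act x (a * b) = 0 := by
  rw [hmul, h, map_zero, LinearMap.zero_apply]

theorem act_Sq_eq_zero_of_forall_two_pow {x : M} {k : ℕ} (hx : ∀ i ≤ k, act x (Sq (2 ^ i)) = 0)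
    {n : ℕ} (hn : 0 < n) (hnk : n ≤ 2 ^ k) : act x (Sq n) = 0 := by
  induction n using Nat.strong_induction_on with
  | _ n ih =>
    by_cases hpow : ∃ i, n = 2 ^ i
    · obtain ⟨i, rfl⟩ := hpow
      exact hx i ((Nat.pow_le_pow_iff_right one_lt_two).mp hnk)
    obtain ⟨a, j, ha, haj, rfl⟩ :=
      Nat.exists_eq_add_two_pow_of_ne_two_pow hn (fun i h => hpow ⟨i, h⟩)
    have hlead : act x (Sq a * Sq (2 ^ j)) = 0 :=
      act_mul_eq_zero_of_act_eq_zero act hmul (ih a (by omega) ha (by omega)) _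
    have htail : ∑ c ∈ Finset.range (a / 2),
        ((2 ^ j - (c + 1) - 1).choose (a - 2 * (c + 1)) : ZMod 2) •
          act x (Sq (a + 2 ^ j - (c + 1)) * Sq (c + 1)) = 0 := by
      refine Finset.sum_eq_zero fun c hc => ?_
      rw [Finset.mem_range] at hc
      rw [act_mul_eq_zero_of_act_eq_zero act hmul
        (ih (a + 2 ^ j - (c + 1)) (by omega) (by omega) (by omega)) _, smul_zero]
    rw [Sq_mul_Sq_two_pow ha haj] at hlead
    simp only [map_add, map_sum, map_smul] at hlead
    rwa [htail, add_zero] at hlead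

end RightAction

/-- Let `M` be a right `A`-algebra: an F₂-algebra with a right action of the
mod-2 Steenrod algebra satisfying the Cartan formula
`(xy)Sq^n = Σ_{p+q=n} (xSq^p)(ySq^q)` (and `1·Sq^n = 0` for `n > 0`).
For every `k ≥ 0`, the set `Δ_M(k) = ⋂_{i=0}^k ker Sq^{2^i}` is a subalgebra
of `M`. -/
theorem stmt_10 (M : Type*) [Ring M] [Algebra (ZMod 2) M]
    (act : M →ₗ[ZMod 2] Steenrod →ₗ[ZMod 2] M)
    (hone : ∀ x : M, act x 1 = x)
    (hmul : ∀ (x : M) (a b : Steenrod), act x (a * b) = act (act x a) b)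
    (hcartan : ∀ (x y : M) (n : ℕ),
      act (x * y) (Sq n) =
        ∑ p ∈ Finset.range (n + 1), act x (Sq p) * act y (Sq (n - p)))
    (hunit : ∀ n : ℕ, 0 < n → act (1 : M) (Sq n) = 0)
    (k : ℕ) :
    ∃ S : Subalgebra (ZMod 2) M,
      (S : Set M) = {x : M | ∀ i ≤ k, act x (Sq (2 ^ i)) = 0} := by
  let Δ : Submodule (ZMod 2) M := ⨅ i ∈ Set.Iic k, LinearMap.ker (act.flip (Sq (2 ^ i)))
  have hΔ : ∀ x, x ∈ Δ ↔ ∀ i ≤ k, act x (Sq (2 ^ i)) = 0 := by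
    simp [Δ, Submodule.mem_iInf]
  have hmulΔ : ∀ x y, x ∈ Δ → y ∈ Δ → x * y ∈ Δ := by
    intro x y hx hy
    rw [hΔ] at hx hy ⊢
    intro i hi
    rw [hcartan, Finset.sum_range_succ', Sq_zero, hone, Nat.sub_zero, hy i hi, mul_zero,
      add_zero]
    refine Finset.sum_eq_zero fun p hp => ?_
    have hp' : p + 1 ≤ 2 ^ k :=
      (Finset.mem_range.mp hp).trans_le (Nat.pow_le_pow_right two_pos hi)
    rw [act_Sq_eq_zero_of_forall_two_pow act hmul hx p.succ_pos hp', zero_mul]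
  refine ⟨Δ.toSubalgebra ((hΔ 1).mpr fun i _ => hunit _ (by positivity)) hmulΔ, ?_⟩
  ext x
  exact hΔ x
end
end

section
/- Let Γ = ⊕_{s≥0} Γ_s be the free associative F₂-algebra on non-commuting generators [a], a ≥ 1, with right Steenrod action determined by [a]Sq^i = C(a−i, i)[a−i] mod 2 and the Cartan formula. If x = Σ_{i≥1} [i]·x_i ∈ Γ_s (s ≥ 2) satisfies xSq^1 = 0, then for each n ≥ 1: x_{2n} = x_{2n−1}Sq^1 and x_{2n}Sq^1 = 0. -/
noncomputable section

/-- `Γ`: the free associative F₂-algebra on non-commuting generators `[a]`,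
modelled as the monoid algebra of the free monoid on ℕ (only letters `a ≥ 1`
are used; the Steenrod action never produces the letter `0` from them). -/
abbrev Gam : Type := MonoidAlgebra (ZMod 2) (FreeMonoid ℕ)

/-- The generator `[a]` of `Γ`. -/
def gen (a : ℕ) : Gam := MonoidAlgebra.single (FreeMonoid.ofList [a]) 1

/-- The right Steenrod action on a word, defined on generators by
`[a]Sq^i = C(a−i, i)·[a−i]` (mod 2) and extended by the Cartan formula. -/
def sqWord : List ℕ → ℕ → Gam
  | [], n => if n = 0 then 1 else 0
  | a :: w, n =>
      ∑ p ∈ Finset.range (n + 1),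
        (Nat.choose (a - p) p : ZMod 2) • (gen (a - p) * sqWord w (n - p))

/-- The right Steenrod action on `Γ`: `SqG n x = x·Sq^n`. -/
def SqG (n : ℕ) (x : Gam) : Gam :=
  Finsupp.sum x.coeff fun w c => c • sqWord (FreeMonoid.toList w) n

/-- `x` is homogeneous of length `s` (i.e. `x ∈ Γ_s`). -/
def homLen (s : ℕ) (x : Gam) : Prop :=
  ∀ w ∈ x.coeff.support, (FreeMonoid.toList w).length = s

/-! By the Cartan formula, `xSq¹ = Σ_i ([i]Sq¹·x_i + [i]·x_iSq¹)` with `[i]Sq¹ = (i − 1)·[i − 1]`,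
so the component of `xSq¹` starting with the letter `[j]` is `j·x_{j+1} + x_jSq¹`. All these
components vanish; over `F₂` the cases `j = 2n − 1` and `j = 2n` are the two claims. -/

open MonoidAlgebra

instance : CharP Gam 2 :=
  charP_of_injective_algebraMap (algebraMap (ZMod 2) Gam).injective 2

def sqLinear (n : ℕ) : Gam →ₗ[ZMod 2] Gam :=
  Finsupp.linearCombination (ZMod 2) (fun w : FreeMonoid ℕ => sqWord w.toList n) ∘ₗ
    (coeffLinearEquiv (ZMod 2)).toLinearMap

theorem sqLinear_apply (n : ℕ) (x : Gam) : sqLinear n x = SqG n x := rfl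

theorem SqG_single_one (n : ℕ) (w : FreeMonoid ℕ) : SqG n (single w 1) = sqWord w.toList n := by
  rw [← sqLinear_apply]
  simp [sqLinear]

-- `stripGen j` extracts the component `x_j` of `x = Σ_i [i]·x_i`.
def stripGen (j : ℕ) : Gam →ₗ[ZMod 2] Gam :=
  Finsupp.linearCombination (ZMod 2) (fun w : FreeMonoid ℕ =>
      if w.toList.head? = some j then single (FreeMonoid.ofList w.toList.tail) 1 else 0) ∘ₗ
    (coeffLinearEquiv (ZMod 2)).toLinearMap

theorem gen_mul_single (a : ℕ) (w : FreeMonoid ℕ) (c : ZMod 2) :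
    gen a * single w c = single (FreeMonoid.of a * w) c := by
  rw [gen, single_mul_single, one_mul]
  rfl

theorem stripGen_gen_mul (j i : ℕ) (y : Gam) : stripGen j (gen i * y) = if i = j then y else 0 := by
  have : stripGen j ∘ₗ LinearMap.mulLeft (ZMod 2) (gen i) = if i = j then LinearMap.id else 0 := by
    refine (MonoidAlgebra.basis _ _).ext fun w => ?_
    split_ifs with h <;> simp [stripGen, gen_mul_single, h]
  have hy := LinearMap.congr_fun this y
  split_ifs at hy ⊢ <;> simpa using hy

theorem sqWord_zero (l : List ℕ) : sqWord l 0 = single (FreeMonoid.ofList l) 1 := by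
  induction l with
  | nil => simp [sqWord, one_def]
  | cons a w ih => simp [sqWord, ih, gen_mul_single]

theorem SqG_one_gen_mul (a : ℕ) (y : Gam) :
    SqG 1 (gen a * y) = ((a - 1 : ℕ) : ZMod 2) • (gen (a - 1) * y) + gen a * SqG 1 y := by
  have : sqLinear 1 ∘ₗ LinearMap.mulLeft (ZMod 2) (gen a) =
      ((a - 1 : ℕ) : ZMod 2) • LinearMap.mulLeft (ZMod 2) (gen (a - 1)) +
        LinearMap.mulLeft (ZMod 2) (gen a) ∘ₗ sqLinear 1 := by
    refine (MonoidAlgebra.basis _ _).ext fun w => ?_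
    simp [sqLinear_apply, gen_mul_single, SqG_single_one, sqWord, Finset.sum_range_succ,
      sqWord_zero, add_comm]
  simpa [sqLinear_apply] using LinearMap.congr_fun this y

theorem stripGen_SqG_one_gen_mul (j i : ℕ) (y : Gam) :
    stripGen j (SqG 1 (gen i * y)) =
      (if i = j + 1 then (j : ZMod 2) • y else 0) + if i = j then SqG 1 y else 0 := by
  rw [SqG_one_gen_mul, map_add, map_smul, stripGen_gen_mul, stripGen_gen_mul]
  congr 1
  -- `i = 0` is the one case with `i - 1 = j` but `i ≠ j + 1`; there the coefficient `0 - 1` vanishes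
  by_cases h : i = j + 1
  · simp [h]
  · rcases Nat.eq_zero_or_pos i with rfl | hi
    · simp
    · simp [h, show i - 1 ≠ j by omega]

theorem stripGen_SqG_one_finsum {x_ : ℕ → Gam} (hfin : (Function.support x_).Finite) (j : ℕ) :
    stripGen j (SqG 1 (∑ᶠ i, gen i * x_ i)) = (j : ZMod 2) • x_ (j + 1) + SqG 1 (x_ j) := by
  have hsupp : Function.HasFiniteSupport fun i => gen i * x_ i :=
    Function.HasFiniteSupport.mul_right gen hfin
  have := map_finsum (stripGen j ∘ₗ sqLinear 1) hsupp
  simp only [LinearMap.comp_apply, sqLinear_apply, stripGen_SqG_one_gen_mul] at this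
  rw [this, finsum_eq_sum_of_support_subset (s := {j, j + 1}) _ ?_, Finset.sum_pair (by omega)]
  · simp [add_comm]
  · intro i hi
    contrapose! hi
    simp_all

theorem stmt_12_general (x : Gam) (x_ : ℕ → Gam)
    (hfin : (Function.support x_).Finite)
    (hx : x = ∑ᶠ i : ℕ, gen i * x_ i)
    (hker : SqG 1 x = 0) :
    ∀ n : ℕ, 1 ≤ n →
      x_ (2 * n) = SqG 1 (x_ (2 * n - 1)) ∧ SqG 1 (x_ (2 * n)) = 0 := by
  intro n hn
  have hcomp (j : ℕ) : (j : ZMod 2) • x_ (j + 1) + SqG 1 (x_ j) = 0 := by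
    rw [← stripGen_SqG_one_finsum hfin, ← hx, hker, map_zero]
  have hodd := hcomp (2 * n - 1)
  rw [Nat.sub_add_cancel (by omega), ZMod.natCast_eq_one_iff_odd.mpr ⟨n - 1, by omega⟩,
    one_smul, CharTwo.add_eq_zero] at hodd
  have heven := hcomp (2 * n)
  rw [ZMod.natCast_eq_zero_iff_even.mpr (even_two_mul n), zero_smul, zero_add] at heven
  exact ⟨hodd, heven⟩

/-- If `x = Σ_{i≥1} [i]·x_i ∈ Γ_s` (`s ≥ 2`) satisfies `xSq¹ = 0`, then for
each `n ≥ 1`: `x_{2n} = x_{2n−1}Sq¹` and `x_{2n}Sq¹ = 0`. -/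
theorem stmt_12 (s : ℕ) (hs : 2 ≤ s) (x : Gam) (x_ : ℕ → Gam)
    (hxlen : homLen s x) (hcomplen : ∀ i, homLen (s - 1) (x_ i))
    (hfin : (Function.support x_).Finite) (h0 : x_ 0 = 0)
    (hx : x = ∑ᶠ i : ℕ, gen i * x_ i)
    (hker : SqG 1 x = 0) :
    ∀ n : ℕ, 1 ≤ n →
      x_ (2 * n) = SqG 1 (x_ (2 * n - 1)) ∧ SqG 1 (x_ (2 * n)) = 0 :=
  stmt_12_general x x_ hfin hx hker
end
end

section
/- In Γ₁ (the span of [a], a ≥ 1, with [a]Sq^i = C(a−i,i)[a−i] mod 2), for every degree d ≥ 2 one has ker Sq^2 ∩ Γ_{1,d} = im(Sq^2 : Γ_{1,d+2} → Γ_{1,d}). Moreover every element of Γ_{1,d+2} in the Sq^2-preimage is of the form [4j] or [4j+1] (j ≥ 1), and all such elements are annihilated by Sq^3. -/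
/-!
Each `Γ_{1,d}` is `{0, [d]}`, so everything reduces to the parities of `C(n,2)` and `C(n,3)`,
which Lucas' theorem reads off from `n mod 4`: `[n+2]Sq² = [n]` iff `n ≡ 2, 3 (mod 4)`, and
`[n+3]Sq³ = [n]` iff `n ≡ 3 (mod 4)`. For `d ≥ 2` the kernel condition on `[d]` and the image
condition from `[d+2]` are therefore the same congruence `d ≡ 2, 3 (mod 4)`, which also forces
`d - 1 ≢ 3 (mod 4)`, i.e. `[d+2]Sq³ = 0`.
-/

noncomputable section

/-- The degree-`d` component `Γ_{1,d}`: elements supported on the single index `d`. -/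
def Gdeg (d : ℕ) : Set Gamma1 := {x | ∀ a ∈ x.support, a = d}

lemma even_choose_two_iff (n : ℕ) : Even (n.choose 2) ↔ n % 4 = 0 ∨ n % 4 = 1 := by
  have lucas : n.choose 2 ≡ n / 2 [MOD 2] := by
    simpa using Choose.choose_modEq_choose_mod_mul_choose_div_nat (n := n) (k := 2) (p := 2)
  rw [Nat.even_iff, lucas]
  omega

lemma even_choose_three_iff (n : ℕ) : Even (n.choose 3) ↔ n % 4 ≠ 3 := by
  have lucas : n.choose 3 ≡ n % 2 * (n / 2) [MOD 2] := by
    simpa using Choose.choose_modEq_choose_mod_mul_choose_div_nat (n := n) (k := 3) (p := 2)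
  rw [Nat.even_iff, lucas, ← Nat.even_iff, Nat.even_mul, Nat.even_iff, Nat.even_iff]
  omega

lemma e_ne_zero (a : ℕ) : e a ≠ 0 := by
  simp [e]

lemma sq1_zero (i : ℕ) : sq1 i 0 = 0 := by
  simp [sq1]

lemma sq1_e (i a : ℕ) : sq1 i (e a) = if Even ((a - i).choose i) then 0 else e (a - i) := by
  rw [sq1, e, Finsupp.sum_single_index (by simp), one_smul]
  split_ifs with h
  · rw [ZMod.natCast_eq_zero_iff_even.mpr h, zero_smul]
  · rw [ZMod.natCast_eq_one_iff_odd.mpr (Nat.not_even_iff_odd.mp h), one_smul]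

lemma sq1_two_e_add_two (n : ℕ) :
    sq1 2 (e (n + 2)) = if n % 4 = 2 ∨ n % 4 = 3 then e n else 0 := by
  simp only [sq1_e, Nat.add_sub_cancel, even_choose_two_iff]
  split_ifs <;> first | rfl | omega

lemma sq1_three_e_add_three (n : ℕ) :
    sq1 3 (e (n + 3)) = if n % 4 = 3 then e n else 0 := by
  simp only [sq1_e, Nat.add_sub_cancel, even_choose_three_iff]
  split_ifs <;> first | rfl | omega

lemma Gdeg_eq_pair (d : ℕ) : Gdeg d = {0, e d} := by
  ext x
  have hsupp : x ∈ Gdeg d ↔ x.support ⊆ {d} := by simp [Gdeg, Finset.subset_iff]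
  rw [hsupp, Finsupp.support_subset_singleton']
  constructor
  · rintro ⟨b, rfl⟩
    rcases (by decide : ∀ c : ZMod 2, c = 0 ∨ c = 1) b with rfl | rfl
    exacts [Or.inl (Finsupp.single_zero d), Or.inr rfl]
  · rintro (rfl | rfl)
    exacts [⟨0, by simp⟩, ⟨1, rfl⟩]

lemma ker_sq1_two_eq_image (n : ℕ) :
    {x | x ∈ Gdeg (n + 2) ∧ sq1 2 x = 0} = sq1 2 '' Gdeg (n + 4) := by
  have hker := sq1_two_e_add_two n
  have him := sq1_two_e_add_two (n + 2)
  rw [Gdeg_eq_pair, Gdeg_eq_pair, Set.image_pair, sq1_zero, him]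
  ext x
  simp only [Set.mem_ofPred_eq, Set.mem_insert_iff, Set.mem_singleton_iff]
  constructor
  · rintro ⟨rfl | rfl, hx⟩
    · exact Or.inl rfl
    · rw [hker] at hx
      split_ifs at hx with h
      · exact absurd hx (e_ne_zero n)
      · rw [if_pos (by omega)]
        exact Or.inr rfl
  · rintro (rfl | rfl)
    · exact ⟨Or.inl rfl, sq1_zero 2⟩
    · split_ifs with h
      · exact ⟨Or.inr rfl, by rw [hker, if_neg (by omega)]⟩
      · exact ⟨Or.inl rfl, sq1_zero 2⟩

lemma eq_e_of_sq1_two_eq_e {n : ℕ} {y : Gamma1} (hy : y ∈ Gdeg (n + 2)) (h : sq1 2 y = e n) :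
    y = e (n + 2) ∧ (n % 4 = 2 ∨ n % 4 = 3) := by
  rw [Gdeg_eq_pair] at hy
  rcases hy with rfl | rfl
  · exact absurd (sq1_zero 2 ▸ h).symm (e_ne_zero n)
  · refine ⟨rfl, ?_⟩
    rw [sq1_two_e_add_two] at h
    split_ifs at h with hn
    · exact hn
    · exact absurd h.symm (e_ne_zero n)

/-- For every `d ≥ 2`, `ker Sq² ∩ Γ_{1,d} = im (Sq² : Γ_{1,d+2} → Γ_{1,d})`;
moreover every element of `Γ_{1,d+2}` mapping onto the generator `[d]` under `Sq²`
is of the form `[4j]` or `[4j+1]` with `j ≥ 1`, and is annihilated by `Sq³`. -/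
theorem stmt_18 (d : ℕ) (hd : 2 ≤ d) :
    ({x | x ∈ Gdeg d ∧ sq1 2 x = 0} = sq1 2 '' Gdeg (d + 2)) ∧
    (∀ y ∈ Gdeg (d + 2), sq1 2 y = e d →
      (∃ j : ℕ, 1 ≤ j ∧ (d + 2 = 4 * j ∨ d + 2 = 4 * j + 1)) ∧ sq1 3 y = 0) := by
  obtain ⟨n, rfl⟩ : ∃ n, d = n + 2 := ⟨d - 2, by omega⟩
  refine ⟨ker_sq1_two_eq_image n, fun y hy hsq => ?_⟩
  obtain ⟨rfl, hn⟩ := eq_e_of_sq1_two_eq_e hy hsq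
  refine ⟨⟨(n + 4) / 4, by omega, by omega⟩, ?_⟩
  rw [show n + 2 + 2 = n + 1 + 3 by ring, sq1_three_e_add_three, if_neg (by omega)]
end
end
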